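/- arXiv:2303.06127 — 6 statements merged into one kernel-verified Lean document; each statement's English description precedes it below -/
import Mathlib

section
/- Let I be an interval and S a finite pairwise-disjoint set of intervals. Then at most two members of S partially conflict with I, i.e. the set {J ∈ S : J ∩ I ≠ ∅, J ⊄ I and I ⊄ J (as subsets of ℝ)} has cardinality at most 2. -/
open scoped Classical

/-- An interval: a pair `(s, f)` of reals with `s < f`, identified with `[s, f) ⊆ ℝ`. -/
structure Ivl where
  s : ℝ
  f : ℝ
  lt : s < f

namespace Ivl

noncomputable instance : DecidableEq Ivl := fun a b =>
  decidable_of_iff (a.s = b.s ∧ a.f = b.f) (by cases a; cases b; simp)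

/-- The set of points covered by an interval. -/
def toSet (I : Ivl) : Set ℝ := Set.Ico I.s I.f

/-- Two intervals conflict if their point sets intersect. -/
def Conflict (I J : Ivl) : Prop := (I.toSet ∩ J.toSet).Nonempty

/-- A finite set of intervals is feasible (pairwise disjoint) if no two distinct members
conflict. -/
def Feasible (S : Finset Ivl) : Prop :=
  ∀ I ∈ S, ∀ J ∈ S, I ≠ J → ¬ Conflict I J

end Ivl

/-- In a feasible set, at most one interval contains a given point. -/
lemma card_contains_le_one (S : Finset Ivl) (hS : Ivl.Feasible S) (x : ℝ) :
    (S.filter (fun J => x ∈ J.toSet)).card ≤ 1 := by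
  refine Finset.card_le_one.2 ?_
  intro a ha b hb
  simp only [Finset.mem_filter] at ha hb
  by_contra hne
  exact hS a ha.1 b hb.1 hne ⟨x, ha.2, hb.2⟩

/-- At most two members of a pairwise-disjoint finite set of intervals can partially conflict
with a given interval `I`. -/
theorem at_most_two_partial_conflicts (I : Ivl) (S : Finset Ivl) (hS : Ivl.Feasible S) :
    (S.filter (fun J => Ivl.Conflict J I ∧ ¬ J.toSet ⊆ I.toSet ∧ ¬ I.toSet ⊆ J.toSet)).card
      ≤ 2 := by
  have hsub : S.filter (fun J => Ivl.Conflict J I ∧ ¬ J.toSet ⊆ I.toSet ∧ ¬ I.toSet ⊆ J.toSet)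
      ⊆ S.filter (fun J => I.s ∈ J.toSet) ∪ S.filter (fun J => I.f ∈ J.toSet) := by
    intro J hJ
    simp only [Finset.mem_filter, Finset.mem_union] at hJ ⊢
    obtain ⟨hJS, ⟨x, hxJ, hxI⟩, hnJI, _⟩ := hJ
    simp only [Ivl.toSet, Set.mem_Ico] at hxJ hxI ⊢
    by_cases hs : J.s < I.s
    · -- J starts before I; since they intersect, J.f > I.s, so I.s ∈ J
      left
      exact ⟨hJS, le_of_lt hs, lt_of_le_of_lt hxI.1 hxJ.2⟩
    · push_neg at hs
      -- J.s ≥ I.s; since J ⊄ I, J.f > I.f; and J.s ≤ x < I.f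
      right
      refine ⟨hJS, le_of_lt (lt_of_le_of_lt hxJ.1 hxI.2), ?_⟩
      by_contra hf
      push_neg at hf
      exact hnJI (fun y hy => ⟨le_trans hs hy.1, lt_of_lt_of_le hy.2 hf⟩)
  calc (S.filter _).card ≤ _ := Finset.card_le_card hsub
    _ ≤ (S.filter (fun J => I.s ∈ J.toSet)).card + (S.filter (fun J => I.f ∈ J.toSet)).card :=
        Finset.card_union_le _ _
    _ ≤ 1 + 1 := add_le_add (card_contains_le_one S hS I.s) (card_contains_le_one S hS I.f)
end

section
/- Let k ≥ 1 and let σ be a finite list of intervals such that the set of lengths of intervals occurring in σ has at most k elements. Then every pairwise-disjoint finite set T of intervals, each of which occurs in σ, satisfies |T| ≤ 2k · |alg1(σ)|. (That is, Algorithm 1 is 2k-competitive for any-order unweighted interval selection with k different lengths.) -/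
open scoped Classical

namespace Ivl

/-- The length of an interval. -/
def length (I : Ivl) : ℝ := I.f - I.s

end Ivl

/-- One step of Algorithm 1: if some currently scheduled interval properly contains the new
interval `I`, replace it with `I`; otherwise take `I` iff it conflicts with nothing. -/
noncomputable def alg1Step (S : Finset Ivl) (I : Ivl) : Finset Ivl :=
  if h : ∃ I' ∈ S, I.toSet ⊂ I'.toSet then
    insert I (S.erase h.choose)
  else if ∀ I' ∈ S, ¬ Ivl.Conflict I I' then insert I S
  else S

/-- Algorithm 1 run on a list of online arrivals. -/
noncomputable def alg1 (σ : List Ivl) : Finset Ivl := σ.foldl alg1Step ∅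

/-!
Each member of the solution carries a *history*: the intervals that have successively held its
place. They are nested, so a history has at most `k` distinct lengths and at most `k` elements.
Every arrival `J` contains a left endpoint (in `[J.s, J.f)`) or a right endpoint (in
`(J.s, J.f]`) of some interval in some history: an accepted `J` contains its own left endpoint,
and a rejected `J` conflicts with a current member `I` without lying properly inside it, so it
contains `I.s` or `I.f`; when `I` is later replaced, its history passes to its replacement.
Disjoint intervals never share such an endpoint, hence `|T| ≤ 2k · |alg1 σ|`.
-/

namespace Ivl

lemma s_mem_toSet (I : Ivl) : I.s ∈ I.toSet := ⟨le_rfl, I.lt⟩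

lemma conflict_self (I : Ivl) : Conflict I I := ⟨I.s, I.s_mem_toSet, I.s_mem_toSet⟩

lemma conflict_comm (I J : Ivl) : Conflict I J ↔ Conflict J I := by
  rw [Conflict, Conflict, Set.inter_comm]

lemma Conflict.mono_left {I I' J : Ivl} (h : Conflict I J) (hI : I.toSet ⊆ I'.toSet) :
    Conflict I' J :=
  h.mono (Set.inter_subset_inter_left _ hI)

lemma length_lt_length_of_ssubset {I J : Ivl} (h : I.toSet ⊂ J.toSet) :
    I.length < J.length := by
  obtain ⟨hs, hf⟩ := (Set.Ico_subset_Ico_iff I.lt).1 h.1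
  refine lt_of_le_of_ne (by unfold length; linarith) fun heq => h.ne ?_
  have hs' : I.s = J.s := by unfold length at heq; linarith
  have hf' : I.f = J.f := by unfold length at heq; linarith
  rw [toSet, toSet, hs', hf']

lemma feasible_iff_pairwise {S : Finset Ivl} :
    Feasible S ↔ (S : Set Ivl).Pairwise fun I J => ¬ Conflict I J :=
  Iff.rfl

lemma Feasible.subset {S S' : Finset Ivl} (hS : Feasible S) (h : S' ⊆ S) : Feasible S' :=
  feasible_iff_pairwise.2 <| (feasible_iff_pairwise.1 hS).mono (Finset.coe_subset.2 h)

lemma Feasible.insert {S : Finset Ivl} {I : Ivl} (hS : Feasible S)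
    (hI : ∀ J ∈ S, ¬ Conflict I J) : Feasible (insert I S) := by
  rw [feasible_iff_pairwise, Finset.coe_insert, Set.pairwise_insert]
  exact ⟨hS, fun J hJ _ => ⟨hI J hJ, mt (conflict_comm J I).1 (hI J hJ)⟩⟩

/-- `J` is charged to the left endpoint of `C` (`b = true`) if `C.s ∈ [J.s, J.f)`, and to its
right endpoint (`b = false`) if `C.f ∈ (J.s, J.f]`. -/
def ChargedTo (J C : Ivl) : Bool → Prop
  | true => C.s ∈ J.toSet
  | false => C.f ∈ Set.Ioc J.s J.f

lemma exists_chargedTo_of_conflict {J C : Ivl} (h : Conflict J C) (hJC : ¬ J.toSet ⊂ C.toSet) :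
    ∃ b, ChargedTo J C b := by
  obtain ⟨x, ⟨hJs, hJf⟩, hCs, hCf⟩ := h
  rcases le_or_gt J.s C.s with hs | hs
  · exact ⟨true, hs, hCs.trans_lt hJf⟩
  rcases le_or_gt C.f J.f with hf | hf
  · exact ⟨false, hJs.trans_lt hCf, hf⟩
  refine absurd ⟨Set.Ico_subset_Ico hs.le hf.le, fun hCJ => ?_⟩ hJC
  exact (hs.trans_le (hCJ C.s_mem_toSet).1).false

lemma Feasible.subsingleton_chargedTo {T : Finset Ivl} (hT : Feasible T) (C : Ivl) (b : Bool) :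
    ({J ∈ T | ChargedTo J C b} : Set Ivl).Subsingleton := by
  rintro J ⟨hJ, hJC⟩ J' ⟨hJ', hJ'C⟩
  by_contra hne
  refine hT J hJ J' hJ' hne ?_
  cases b with
  | true => exact ⟨C.s, hJC, hJ'C⟩
  | false =>
    -- both intervals contain `[max J.s J'.s, C.f)`
    exact ⟨max J.s J'.s, ⟨le_max_left _ _, (max_lt hJC.1 hJ'C.1).trans_le hJC.2⟩,
      ⟨le_max_right _ _, (max_lt hJC.1 hJ'C.1).trans_le hJ'C.2⟩⟩

end Ivl

open Ivl

/-- `K` stands for the intervals that have successively occupied the place of `I` in the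
solution: they are nested, so their lengths are pairwise distinct, and `I` is the shortest. -/
structure IsHistory (σ : List Ivl) (I : Ivl) (K : Finset Ivl) : Prop where
  self_mem : I ∈ K
  length_le : ∀ C ∈ K, I.length ≤ C.length
  injOn_length : Set.InjOn Ivl.length K
  mem_list : ∀ C ∈ K, C ∈ σ

lemma isHistory_singleton {σ : List Ivl} {I : Ivl} (hI : I ∈ σ) : IsHistory σ I {I} where
  self_mem := Finset.mem_singleton_self I
  length_le C hC := (congrArg Ivl.length (Finset.mem_singleton.1 hC)).ge
  injOn_length := by simp
  mem_list C hC := Finset.mem_singleton.1 hC ▸ hI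

namespace IsHistory

variable {σ : List Ivl} {I : Ivl} {K : Finset Ivl}

lemma mono {σ' : List Ivl} (h : IsHistory σ I K) (hσ : σ ⊆ σ') : IsHistory σ' I K :=
  { h with mem_list := fun C hC => hσ (h.mem_list C hC) }

lemma insert {I' : Ivl} (h : IsHistory σ I' K) (hlt : I.length < I'.length) (hI : I ∈ σ) :
    IsHistory σ I (insert I K) := by
  have hshorter : ∀ C ∈ K, I.length < C.length := fun C hC => hlt.trans_le (h.length_le C hC)
  have hnotMem : I ∉ K := fun hIK => (hshorter I hIK).false
  refine ⟨Finset.mem_insert_self I K, ?_, ?_, ?_⟩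
  · simp only [Finset.forall_mem_insert, le_refl, true_and]
    exact fun C hC => (hshorter C hC).le
  · rw [Finset.coe_insert, Set.injOn_insert (by exact_mod_cast hnotMem)]
    exact ⟨h.injOn_length, fun ⟨C, hC, hCI⟩ => (hshorter C hC).ne' hCI⟩
  · simpa only [Finset.forall_mem_insert] using ⟨hI, h.mem_list⟩

lemma card_le (h : IsHistory σ I K) : K.card ≤ (σ.map Ivl.length).toFinset.card :=
  Finset.card_le_card_of_injOn Ivl.length
    (fun C hC => List.mem_toFinset.2 (List.mem_map_of_mem (h.mem_list C hC))) h.injOn_length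

end IsHistory

structure IsChargingScheme (σ : List Ivl) (S : Finset Ivl) (hist : Ivl → Finset Ivl) : Prop where
  isHistory : ∀ I ∈ S, IsHistory σ I (hist I)
  charged : ∀ J ∈ σ, ∃ I ∈ S, ∃ C ∈ hist I, ∃ b, J.ChargedTo C b

namespace IsChargingScheme

variable {σ : List Ivl} {S : Finset Ivl} {hist : Ivl → Finset Ivl}

lemma append_of_charged {J : Ivl} (h : IsChargingScheme σ S hist)
    (hJ : ∃ I ∈ S, ∃ C ∈ hist I, ∃ b, J.ChargedTo C b) :
    IsChargingScheme (σ ++ [J]) S hist where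
  isHistory I hI := (h.isHistory I hI).mono (List.subset_append_left _ _)
  charged J' hJ' := by
    rcases List.mem_append.1 hJ' with hJ' | hJ'
    · exact h.charged J' hJ'
    · exact List.mem_singleton.1 hJ' ▸ hJ

/-- The interval `I` enters the solution with history `K`, displacing the members of `S \ S₀`,
whose histories `K` absorbs. -/
lemma insert_update {I : Ivl} {S₀ K : Finset Ivl} (h : IsChargingScheme σ S hist)
    (hS₀ : S₀ ⊆ S) (hI : I ∉ S₀) (hK : IsHistory (σ ++ [I]) I K)
    (hKS : ∀ A ∈ S, A ∉ S₀ → hist A ⊆ K) :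
    IsChargingScheme (σ ++ [I]) (insert I S₀) (Function.update hist I K) := by
  have hne : ∀ A ∈ S₀, A ≠ I := fun A hA hAI => hI (hAI ▸ hA)
  refine ⟨fun A hA => ?_, fun J hJ => ?_⟩
  · rcases Finset.mem_insert.1 hA with rfl | hA
    · rwa [Function.update_self]
    · rw [Function.update_of_ne (hne A hA)]
      exact (h.isHistory A (hS₀ hA)).mono (List.subset_append_left _ _)
  rcases List.mem_append.1 hJ with hJ | hJ
  · obtain ⟨A, hA, C, hC, hJC⟩ := h.charged J hJ
    by_cases hA₀ : A ∈ S₀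
    · refine ⟨A, Finset.mem_insert_of_mem hA₀, C, ?_, hJC⟩
      rwa [Function.update_of_ne (hne A hA₀)]
    · refine ⟨I, Finset.mem_insert_self I S₀, C, ?_, hJC⟩
      rw [Function.update_self]
      exact hKS A hA hA₀ hC
  · obtain rfl := List.mem_singleton.1 hJ
    refine ⟨J, Finset.mem_insert_self J S₀, J, ?_, true, J.s_mem_toSet⟩
    rw [Function.update_self]
    exact hK.self_mem

lemma exists_alg1Step (h : IsChargingScheme σ S hist) (hS : Feasible S) (I : Ivl) :
    ∃ hist', IsChargingScheme (σ ++ [I]) (alg1Step S I) hist' := by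
  have hIσ : I ∈ σ ++ [I] := List.mem_append_right σ (List.mem_singleton_self I)
  unfold alg1Step
  split_ifs with hrep hfree
  · obtain ⟨hI'S, hII'⟩ := hrep.choose_spec
    set I' := hrep.choose
    have hIS : I ∉ S.erase I' := fun hI =>
      hS I' hI'S I (Finset.mem_of_mem_erase hI) (Finset.ne_of_mem_erase hI).symm
        ((conflict_self I).mono_left hII'.1)
    refine ⟨_, h.insert_update (Finset.erase_subset I' S) hIS
      (((h.isHistory I' hI'S).mono (List.subset_append_left _ _)).insert
        (length_lt_length_of_ssubset hII') hIσ) fun A hA hA₀ => ?_⟩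
    rw [show A = I' by simpa [hA] using hA₀]
    exact Finset.subset_insert I (hist I')
  · have hIS : I ∉ S := fun hI => hfree I hI (conflict_self I)
    exact ⟨_, h.insert_update subset_rfl hIS (isHistory_singleton hIσ)
      fun A hA hA₀ => absurd hA hA₀⟩
  · push Not at hrep hfree
    obtain ⟨I₀, hI₀, hconf⟩ := hfree
    obtain ⟨b, hb⟩ := exists_chargedTo_of_conflict hconf (hrep I₀ hI₀)
    exact ⟨hist,
      h.append_of_charged ⟨I₀, hI₀, I₀, (h.isHistory I₀ hI₀).self_mem, b, hb⟩⟩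

/-- The charging map is injective on a feasible `T`: each endpoint of an interval in a history
receives at most one charge. -/
lemma card_le {T : Finset Ivl} (h : IsChargingScheme σ S hist) (hT : Feasible T)
    (hTσ : ∀ J ∈ T, J ∈ σ) : T.card ≤ ∑ I ∈ S, 2 * (hist I).card :=
  calc T.card ≤ (S.biUnion fun I => hist I ×ˢ (Finset.univ : Finset Bool)).card := by
        refine Finset.card_le_card_of_forall_subsingleton (fun J p => J.ChargedTo p.1 p.2)
          (fun J hJ => ?_) fun p _ => hT.subsingleton_chargedTo p.1 p.2
        obtain ⟨I, hI, C, hC, b, hb⟩ := h.charged J (hTσ J hJ)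
        exact ⟨(C, b), Finset.mem_biUnion.2 ⟨I, hI, by simpa using hC⟩, hb⟩
    _ ≤ ∑ I ∈ S, (hist I ×ˢ (Finset.univ : Finset Bool)).card := Finset.card_biUnion_le
    _ = ∑ I ∈ S, 2 * (hist I).card := by simp [Finset.card_product, mul_comm]

end IsChargingScheme

lemma feasible_alg1Step {S : Finset Ivl} (hS : Feasible S) (I : Ivl) : Feasible (alg1Step S I) := by
  unfold alg1Step
  split_ifs with hrep hfree
  · obtain ⟨hI'S, hII'⟩ := hrep.choose_spec
    refine (hS.subset (Finset.erase_subset _ S)).insert fun J hJ hIJ => ?_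
    exact hS _ hI'S J (Finset.mem_of_mem_erase hJ) (Finset.ne_of_mem_erase hJ).symm
      (hIJ.mono_left hII'.1)
  · exact hS.insert hfree
  · exact hS

lemma alg1_append_singleton (σ : List Ivl) (I : Ivl) :
    alg1 (σ ++ [I]) = alg1Step (alg1 σ) I := by
  simp only [alg1, List.foldl_append, List.foldl_cons, List.foldl_nil]

lemma feasible_alg1 (σ : List Ivl) : Feasible (alg1 σ) := by
  induction σ using List.reverseRecOn with
  | nil => simp [alg1, Feasible]
  | append_singleton σ I ih => rw [alg1_append_singleton]; exact feasible_alg1Step ih I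

lemma exists_isChargingScheme_alg1 (σ : List Ivl) :
    ∃ hist, IsChargingScheme σ (alg1 σ) hist := by
  induction σ using List.reverseRecOn with
  | nil => exact ⟨fun _ => ∅, by simp [alg1], by simp⟩
  | append_singleton σ I ih =>
    obtain ⟨hist, h⟩ := ih
    rw [alg1_append_singleton]
    exact h.exists_alg1Step (feasible_alg1 σ) I

theorem alg1_two_k_competitive_general (k : ℕ) (σ : List Ivl)
    (hlen : (σ.map Ivl.length).toFinset.card ≤ k)
    (T : Finset Ivl) (hT : ∀ I ∈ T, I ∈ σ) (hfeas : Ivl.Feasible T) :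
    T.card ≤ 2 * k * (alg1 σ).card := by
  obtain ⟨hist, h⟩ := exists_isChargingScheme_alg1 σ
  calc T.card ≤ ∑ I ∈ alg1 σ, 2 * (hist I).card := h.card_le hfeas hT
    _ ≤ ∑ _I ∈ alg1 σ, 2 * k := Finset.sum_le_sum fun I hI =>
        Nat.mul_le_mul_left 2 (((h.isHistory I hI).card_le).trans hlen)
    _ = 2 * k * (alg1 σ).card := by rw [Finset.sum_const, smul_eq_mul, mul_comm]

/-- Algorithm 1 is `2k`-competitive for any-order unweighted interval selection with at most
`k` distinct interval lengths. -/
theorem alg1_two_k_competitive (k : ℕ) (hk : 1 ≤ k) (σ : List Ivl)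
    (hlen : (σ.map Ivl.length).toFinset.card ≤ k)
    (T : Finset Ivl) (hT : ∀ I ∈ T, I ∈ σ) (hfeas : Ivl.Feasible T) :
    T.card ≤ 2 * k * (alg1 σ).card :=
  alg1_two_k_competitive_general k σ hlen T hT hfeas
end

section
/- For every k ≥ 1 there exists a finite list σ of intervals, whose intervals have exactly k distinct lengths, such that |alg1(σ)| = 1 and some pairwise-disjoint set of 2k intervals occurring in σ exists. (That is, the competitive ratio 2k of Algorithm 1 is tight.) -/
open scoped Classical

-- construction
noncomputable section Constr

def r (j : ℕ) : ℝ := (4:ℝ)⁻¹ ^ j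

lemma r_pos (j : ℕ) : 0 < r j := by rw [r]; positivity

lemma r_succ (j : ℕ) : r (j+1) = r j / 4 := by
  simp [r, pow_succ]; ring

lemma r_four_le {i j : ℕ} (h : i < j) : 4 * r j ≤ r i := by
  induction j with
  | zero => omega
  | succ n ih =>
    rcases Nat.lt_succ_iff_lt_or_eq.mp h with h' | h'
    · have := ih h'
      have := r_pos (n+1)
      have := r_pos n
      rw [r_succ] at *
      linarith
    · subst h'; rw [r_succ]; linarith [r_pos i]

lemma r_lt {i j : ℕ} (h : i < j) : r j < r i := by
  have := r_four_le h; have := r_pos j; linarith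

lemma r_inj : Function.Injective r := by
  intro i j h
  rcases lt_trichotomy i j with h' | h' | h'
  · exact absurd h (ne_of_gt (r_lt h'))
  · exact h'
  · exact absurd h (ne_of_lt (r_lt h'))

def K (j : ℕ) : Ivl := ⟨-(r j), r j, by have := r_pos j; linarith⟩
def L (j : ℕ) : Ivl := ⟨-3 * r j + r j / 10, -(r j) + r j / 10, by have := r_pos j; linarith⟩
def R (j : ℕ) : Ivl := ⟨r j - r j / 10, 3 * r j - r j / 10, by have := r_pos j; linarith⟩

lemma len_K (j : ℕ) : (K j).length = 2 * r j := by simp [Ivl.length, K]; ring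
lemma len_L (j : ℕ) : (L j).length = 2 * r j := by simp [Ivl.length, L]; ring
lemma len_R (j : ℕ) : (R j).length = 2 * r j := by simp [Ivl.length, R]; ring

def blk (j : ℕ) : List Ivl := [K j, L j, R j]

def sig (k : ℕ) : List Ivl := (List.range k).flatMap blk

def Sn : ℕ → Finset Ivl
  | 0 => ∅
  | (j+1) => {K j}

lemma step_replace (J I : Ivl) (h : I.toSet ⊂ J.toSet) :
    alg1Step {J} I = {I} := by
  have hex : ∃ I' ∈ ({J} : Finset Ivl), I.toSet ⊂ I'.toSet :=
    ⟨J, Finset.mem_singleton_self _, h⟩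
  rw [alg1Step, dif_pos hex]
  have hc : hex.choose = J := Finset.mem_singleton.mp hex.choose_spec.1
  rw [hc]
  simp

lemma step_reject (J I : Ivl) (hns : ¬ I.toSet ⊆ J.toSet) (hc : Ivl.Conflict I J) :
    alg1Step {J} I = {J} := by
  have h1 : ¬ ∃ I' ∈ ({J} : Finset Ivl), I.toSet ⊂ I'.toSet := by
    rintro ⟨I', hI', hsub⟩
    rw [Finset.mem_singleton] at hI'
    subst hI'
    exact hns hsub.1
  have h2 : ¬ ∀ I' ∈ ({J} : Finset Ivl), ¬ Ivl.Conflict I I' := by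
    push_neg
    exact ⟨J, Finset.mem_singleton_self _, hc⟩
  rw [alg1Step, dif_neg h1, if_neg h2]

lemma K_ssubset (j : ℕ) : (K (j+1)).toSet ⊂ (K j).toSet := by
  have h4 := r_four_le (Nat.lt_succ_self j)
  have hp := r_pos j
  have hp' := r_pos (j+1)
  constructor
  · exact Set.Ico_subset_Ico (by simp [K]; linarith) (by simp [K]; linarith)
  · intro hsub
    have : (-(r j)) ∈ (K (j+1)).toSet := hsub (by simp [K, Ivl.toSet]; linarith)
    simp [K, Ivl.toSet] at this
    linarith [this.1]

lemma L_not_sub (j : ℕ) : ¬ (L j).toSet ⊆ (K j).toSet := by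
  have hp := r_pos j
  intro hsub
  have : (-3 * r j + r j / 10) ∈ (K j).toSet :=
    hsub (by simp [L, Ivl.toSet]; linarith)
  simp [K, Ivl.toSet] at this
  linarith [this.1]

lemma L_conflict (j : ℕ) : Ivl.Conflict (L j) (K j) := by
  have hp := r_pos j
  refine ⟨-(r j), ?_, ?_⟩ <;> simp only [L, K, Ivl.toSet, Set.mem_Ico] <;>
    refine ⟨by linarith, by linarith⟩

lemma R_not_sub (j : ℕ) : ¬ (R j).toSet ⊆ (K j).toSet := by
  have hp := r_pos j
  intro hsub
  have : (3 * r j - r j / 10 - r j/100) ∈ (K j).toSet :=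
    hsub (by simp [R, Ivl.toSet]; constructor <;> linarith)
  simp [K, Ivl.toSet] at this
  linarith [this.2]

lemma R_conflict (j : ℕ) : Ivl.Conflict (R j) (K j) := by
  have hp := r_pos j
  refine ⟨r j - r j / 10, ?_, ?_⟩ <;> simp only [R, K, Ivl.toSet, Set.mem_Ico] <;>
    refine ⟨by linarith, by linarith⟩

lemma step_K (n : ℕ) : alg1Step (Sn n) (K n) = {K n} := by
  cases n with
  | zero =>
    rw [Sn, alg1Step]
    rw [dif_neg (by rintro ⟨I', hI', -⟩; simp at hI')]
    rw [if_pos (by intro I' hI'; simp at hI')]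
    rfl
  | succ j =>
    rw [Sn]
    exact step_replace _ _ (K_ssubset j)

lemma foldl_blk (n : ℕ) : List.foldl alg1Step (Sn n) (blk n) = {K n} := by
  rw [blk]
  simp only [List.foldl_cons, List.foldl_nil]
  rw [step_K, step_reject _ _ (L_not_sub n) (L_conflict n),
      step_reject _ _ (R_not_sub n) (R_conflict n)]

lemma alg1_sig (n : ℕ) : List.foldl alg1Step ∅ (sig n) = Sn n := by
  induction n with
  | zero => simp [sig, Sn]
  | succ n ih =>
    rw [sig, List.range_succ, List.flatMap_append, List.foldl_append]
    rw [show (List.range n).flatMap blk = sig n from rfl, ih]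
    simp only [List.flatMap_cons, List.flatMap_nil, List.append_nil]
    rw [foldl_blk]
    rfl

end Constr

section Constr2

lemma conflict_comm {I J : Ivl} (h : Ivl.Conflict I J) : Ivl.Conflict J I := by
  obtain ⟨x, h1, h2⟩ := h; exact ⟨x, h2, h1⟩

lemma not_conflict_of_le {I J : Ivl} (h : I.f ≤ J.s) : ¬ Ivl.Conflict I J := by
  rintro ⟨x, ⟨h1, h2⟩, h3, h4⟩
  exact absurd (lt_of_lt_of_le h2 (le_trans h h3)) (lt_irrefl x)

lemma L_lt_R (i j : ℕ) : (L i).f ≤ (R j).s := by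
  have := r_pos i; have := r_pos j
  simp only [L, R]; linarith

lemma L_lt_L {i j : ℕ} (h : i < j) : (L i).f ≤ (L j).s := by
  have h4 := r_four_le h; have := r_pos i; have := r_pos j
  simp only [L]; linarith

lemma R_lt_R {i j : ℕ} (h : i < j) : (R j).f ≤ (R i).s := by
  have h4 := r_four_le h; have := r_pos i; have := r_pos j
  simp only [R]; linarith

lemma L_inj : Function.Injective L := by
  intro i j h
  have : (L i).f = (L j).f := by rw [h]
  simp only [L] at this
  exact r_inj (by linarith)

lemma R_inj : Function.Injective R := by
  intro i j h
  have : (R i).f = (R j).f := by rw [h]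
  simp only [R] at this
  exact r_inj (by linarith)

lemma L_ne_R (i j : ℕ) : L i ≠ R j := by
  intro h
  have : (L i).s = (R j).s := by rw [h]
  have h' : (-3 * r i + r i / 10) = (r j - r j / 10) := this
  have := r_pos i; have := r_pos j
  linarith

lemma L_mem_sig {j k : ℕ} (h : j < k) : L j ∈ sig k := by
  simp only [sig, List.mem_flatMap]
  exact ⟨j, List.mem_range.mpr h, by simp [blk]⟩

lemma R_mem_sig {j k : ℕ} (h : j < k) : R j ∈ sig k := by
  simp only [sig, List.mem_flatMap]
  exact ⟨j, List.mem_range.mpr h, by simp [blk]⟩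

end Constr2


/-- Tightness of the `2k` competitive ratio of Algorithm 1: for every `k ≥ 1` there is a list
of intervals with exactly `k` distinct lengths on which Algorithm 1 ends with a single
interval while a pairwise-disjoint set of `2k` intervals from the list exists. -/
theorem alg1_two_k_tight (k : ℕ) (hk : 1 ≤ k) :
    ∃ σ : List Ivl, (σ.map Ivl.length).toFinset.card = k ∧ (alg1 σ).card = 1 ∧
      ∃ T : Finset Ivl, (∀ I ∈ T, I ∈ σ) ∧ Ivl.Feasible T ∧ T.card = 2 * k := by
  refine ⟨sig k, ?_, ?_, ?_⟩
  · have h2inj : Function.Injective (fun j : ℕ => 2 * r j) := by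
      intro i j h
      have h' : 2 * r i = 2 * r j := h
      exact r_inj (by linarith)
    have : ((sig k).map Ivl.length).toFinset = (Finset.range k).image (fun j => 2 * r j) := by
      ext x
      simp only [List.mem_toFinset, List.mem_map, sig, List.mem_flatMap, List.mem_range,
        Finset.mem_image, Finset.mem_range, blk, List.mem_cons, List.not_mem_nil, or_false]
      constructor
      · rintro ⟨a, ⟨j, hj, (rfl | rfl | rfl)⟩, rfl⟩ <;>
          exact ⟨j, hj, by simp [len_K, len_L, len_R]⟩
      · rintro ⟨j, hj, rfl⟩
        exact ⟨K j, ⟨j, hj, Or.inl rfl⟩, len_K j⟩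
    rw [this, Finset.card_image_of_injective _ h2inj, Finset.card_range]
  · obtain ⟨m, rfl⟩ : ∃ m, k = m + 1 := ⟨k - 1, (Nat.succ_pred_eq_of_pos hk).symm⟩
    rw [alg1, alg1_sig, Sn, Finset.card_singleton]
  · refine ⟨(Finset.range k).image L ∪ (Finset.range k).image R, ?_, ?_, ?_⟩
    · intro I hI
      rcases Finset.mem_union.mp hI with h | h <;>
        obtain ⟨j, hj, rfl⟩ := Finset.mem_image.mp h
      · exact L_mem_sig (Finset.mem_range.mp hj)
      · exact R_mem_sig (Finset.mem_range.mp hj)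
    · intro I hI J hJ hne
      rcases Finset.mem_union.mp hI with h | h <;>
        obtain ⟨i, -, rfl⟩ := Finset.mem_image.mp h <;>
        rcases Finset.mem_union.mp hJ with h' | h' <;>
        obtain ⟨j, -, rfl⟩ := Finset.mem_image.mp h'
      · rcases lt_trichotomy i j with hij | rfl | hij
        · exact fun c => not_conflict_of_le (L_lt_L hij) c
        · exact absurd rfl hne
        · exact fun c => not_conflict_of_le (L_lt_L hij) (conflict_comm c)
      · exact not_conflict_of_le (L_lt_R i j)
      · exact fun c => not_conflict_of_le (L_lt_R j i) (conflict_comm c)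
      · rcases lt_trichotomy i j with hij | rfl | hij
        · exact fun c => not_conflict_of_le (R_lt_R hij) (conflict_comm c)
        · exact absurd rfl hne
        · exact fun c => not_conflict_of_le (R_lt_R hij) c
    · rw [Finset.card_union_of_disjoint, Finset.card_image_of_injective _ L_inj,
        Finset.card_image_of_injective _ R_inj, Finset.card_range]
      · ring
      · rw [Finset.disjoint_left]
        rintro a ha hb
        obtain ⟨i, -, rfl⟩ := Finset.mem_image.mp ha
        obtain ⟨j, -, hj⟩ := Finset.mem_image.mp hb
        exact L_ne_R i j hj.symm
end

section
/- Let A be an online interval-selection algorithm with revocable acceptances that is moreover irrevocable, i.e. A(σ) ⊆ A(σ ++ [I]) for every finite list σ and interval I. Then for every natural number c there exists a finite list σ of intervals with at most 2 distinct lengths such that opt(σ) > c · |A(σ)|. (That is, any-order unweighted interval scheduling with two different lengths and irrevocable decisions has unbounded competitive ratio.) -/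
open scoped Classical

/-- An online interval-selection algorithm with revocable acceptances: a function from finite
lists of intervals to finite sets of intervals such that the output consists of intervals
occurring in the input, is pairwise disjoint, and each new output is contained in the previous
output together with the newly arrived interval. -/
structure OnlineAlg where
  run : List Ivl → Finset Ivl
  mem_of_run : ∀ σ : List Ivl, ∀ I ∈ run σ, I ∈ σ
  feasible_run : ∀ σ : List Ivl, Ivl.Feasible (run σ)
  revocable : ∀ (σ : List Ivl) (I : Ivl), run (σ ++ [I]) ⊆ insert I (run σ)

/-- `opt σ` is the maximum cardinality of a pairwise-disjoint finite set of intervals all of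
which occur in `σ`. -/
noncomputable def opt (σ : List Ivl) : ℕ :=
  (σ.toFinset.powerset.filter (fun T => Ivl.Feasible T)).sup Finset.card

section Work

lemma run_append (A : OnlineAlg)
    (hirr : ∀ (σ : List Ivl) (I : Ivl), A.run σ ⊆ A.run (σ ++ [I])) :
    ∀ (L σ : List Ivl), A.run σ ⊆ A.run (σ ++ L) := by
  intro L
  induction L with
  | nil => intro σ; simp
  | cons x L ih =>
    intro σ
    have h1 := hirr σ x
    have h2 := ih (σ ++ [x])
    simpa using h1.trans h2

lemma le_opt {σ : List Ivl} {S : Finset Ivl} (hsub : S ⊆ σ.toFinset)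
    (hfe : Ivl.Feasible S) : S.card ≤ opt σ := by
  apply Finset.le_sup
  simp [Finset.mem_filter, Finset.mem_powerset, hsub, hfe]

end Work


/-- Any-order unweighted interval scheduling with two distinct lengths and irrevocable
decisions is unbounded: an online algorithm that never discards accepted intervals can be
forced to a competitive ratio worse than any constant `c`, already on instances with at most
2 distinct lengths. -/
theorem irrevocable_unbounded (A : OnlineAlg)
    (hirr : ∀ (σ : List Ivl) (I : Ivl), A.run σ ⊆ A.run (σ ++ [I])) (c : ℕ) :
    ∃ σ : List Ivl, (σ.map Ivl.length).toFinset.card ≤ 2 ∧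
      c * (A.run σ).card < opt σ := by
  set n : ℕ := c + 1 with hn
  have hn0 : (0:ℝ) < n := by positivity
  set big : Ivl := ⟨0, (n:ℝ), hn0⟩ with hbigdef
  set small : ℕ → Ivl := fun i => ⟨(i:ℝ), (i:ℝ)+1, by linarith⟩ with hsmalldef
  -- conflict of big with each small
  have hconf : ∀ i : ℕ, i < n → Ivl.Conflict big (small i) := by
    intro i hi
    refine ⟨(i:ℝ), ?_, ?_⟩ <;>
      simp [Ivl.toSet, hbigdef, hsmalldef, Set.mem_Ico]
    exact_mod_cast hi
  rcases Nat.eq_zero_or_pos c with hc | hc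
  · -- trivial case c = 0
    refine ⟨[big], ?_, ?_⟩
    · simp
    · rw [hc, Nat.zero_mul]
      have h1 : ({big} : Finset Ivl).card ≤ opt [big] := by
        apply le_opt (by simp)
        intro I hI J hJ hne
        simp only [Finset.mem_singleton] at hI hJ
        exact absurd (hI.trans hJ.symm) hne
      simpa using lt_of_lt_of_le Nat.one_pos h1
  · -- c ≥ 1
    by_cases hacc : big ∈ A.run [big]
    · -- algorithm accepted big; flood with unit intervals
      set σ : List Ivl := big :: (List.range n).map small with hσ
      have hbigin : big ∈ A.run σ := by
        have := run_append A hirr ((List.range n).map small) [big]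
        exact this hacc
      refine ⟨σ, ?_, ?_⟩
      · -- at most 2 lengths
        have hsub : (σ.map Ivl.length).toFinset ⊆ {(n:ℝ), 1} := by
          intro x hx
          simp only [List.mem_toFinset, List.mem_map, hσ, List.mem_cons] at hx
          obtain ⟨I, hI, rfl⟩ := hx
          rcases hI with rfl | hI
          · simp [Ivl.length, hbigdef]
          · simp only [List.mem_map, List.mem_range] at hI
            obtain ⟨i, hi, rfl⟩ := hI
            simp [Ivl.length, hsmalldef]
        calc (σ.map Ivl.length).toFinset.card ≤ ({(n:ℝ), 1} : Finset ℝ).card :=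
              Finset.card_le_card hsub
          _ ≤ 2 := by apply le_trans (Finset.card_insert_le _ _); simp
      · -- the ratio bound
        have hrun : A.run σ = {big} := by
          apply Finset.eq_singleton_iff_unique_mem.mpr
          refine ⟨hbigin, ?_⟩
          intro I hI
          have hIσ := A.mem_of_run σ I hI
          rw [hσ, List.mem_cons] at hIσ
          rcases hIσ with rfl | hIσ
          · rfl
          · exfalso
            simp only [List.mem_map, List.mem_range] at hIσ
            obtain ⟨i, hi, rfl⟩ := hIσ
            have hne : big ≠ small i := by
              intro h
              have hf : (n:ℝ) = (i:ℝ) + 1 := congrArg Ivl.f h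
              have hs : (0:ℝ) = (i:ℝ) := congrArg Ivl.s h
              rw [← hs] at hf
              have : n = 1 := by exact_mod_cast hf
              omega
            exact A.feasible_run σ big hbigin (small i) hI hne (hconf i hi)
        rw [hrun]
        simp only [Finset.card_singleton, Nat.mul_one]
        -- opt ≥ n = c + 1
        have hS : ((Finset.range n).image small).card ≤ opt σ := by
          apply le_opt
          · intro I hI
            simp only [Finset.mem_image, Finset.mem_range] at hI
            obtain ⟨i, hi, rfl⟩ := hI
            simp only [List.mem_toFinset, hσ, List.mem_cons, List.mem_map, List.mem_range]
            exact Or.inr ⟨i, hi, rfl⟩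
          · intro I hI J hJ hne hcf
            simp only [Finset.mem_image, Finset.mem_range] at hI hJ
            obtain ⟨i, hi, rfl⟩ := hI
            obtain ⟨j, hj, rfl⟩ := hJ
            have hij : i ≠ j := fun h => hne (by rw [h])
            obtain ⟨x, hx1, hx2⟩ := hcf
            simp only [Ivl.toSet, hsmalldef, Set.mem_Ico] at hx1 hx2
            have : i + 1 ≤ j ∨ j + 1 ≤ i := by omega
            rcases this with h | h
            · have : (i:ℝ) + 1 ≤ (j:ℝ) := by exact_mod_cast h
              linarith [hx1.2, hx2.1]
            · have : (j:ℝ) + 1 ≤ (i:ℝ) := by exact_mod_cast h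
              linarith [hx2.2, hx1.1]
        have hcard : ((Finset.range n).image small).card = n := by
          rw [Finset.card_image_of_injective _ ?_, Finset.card_range]
          intro i j hij
          have := congrArg Ivl.s hij
          simpa [hsmalldef] using Nat.cast_injective this
        omega
    · -- algorithm rejected big: run [big] = ∅
      refine ⟨[big], ?_, ?_⟩
      · simp
      · have hrun : A.run [big] = ∅ := by
          apply Finset.eq_empty_iff_forall_notMem.mpr
          intro I hI
          have := A.mem_of_run [big] I hI
          simp only [List.mem_singleton] at this
          exact hacc (this ▸ hI)
        rw [hrun]
        simp only [Finset.card_empty, Nat.mul_zero]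
        have h1 : ({big} : Finset Ivl).card ≤ opt [big] := by
          apply le_opt (by simp)
          intro I hI J hJ hne
          simp only [Finset.mem_singleton] at hI hJ
          exact absurd (hI.trans hJ.symm) hne
        simpa using lt_of_lt_of_le Nat.one_pos h1
end

section
/- Fix L > 0 and 0 < v < L/2, and consider the multiset consisting of m ≥ 1 copies of I1 = [0, L), one copy of I2 = [v − L, v) and one copy of I3 = [L − v, 2L − v). Then opt of this multiset is 2, and for every ordering of the multiset in which some copy of I1 occurs after both I2 and I3, the always-replace algorithm ends with a final solution of exactly one interval, namely [0, L). (Hence, under uniformly random arrival order, the always-replace algorithm has competitive ratio 2 on this instance with high probability.) -/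
open scoped Classical

/-- `optM M` is the maximum cardinality of a pairwise-disjoint finite set of intervals all of
which occur in the multiset `M`. -/
noncomputable def optM (M : Multiset Ivl) : ℕ :=
  (M.toFinset.powerset.filter (fun T => Ivl.Feasible T)).sup Finset.card

/-- One step of the always-replace algorithm: on arrival of `I`, always take `I`, discarding
every member of the current solution conflicting with it. -/
noncomputable def arStep (S : Finset Ivl) (I : Ivl) : Finset Ivl :=
  insert I (S.filter (fun J => ¬ Ivl.Conflict J I))

/-- The always-replace algorithm run on a list of arrivals. -/
noncomputable def arRun (σ : List Ivl) : Finset Ivl := σ.foldl arStep ∅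

lemma mem_foldl_arStep (l : List Ivl) (S : Finset Ivl) (x : Ivl)
    (hx : x ∈ l.foldl arStep S) : x ∈ S ∨ x ∈ l := by
  induction l generalizing S with
  | nil => exact Or.inl hx
  | cons a l ih =>
    rcases ih (arStep S a) hx with h | h
    · rcases Finset.mem_insert.mp h with h | h
      · exact Or.inr (by simp [h])
      · exact Or.inl (Finset.mem_filter.mp h).1
    · exact Or.inr (List.mem_cons_of_mem _ h)

lemma foldl_all_conflict (I : Ivl) (hII : Ivl.Conflict I I) :
    ∀ (l : List Ivl), l ≠ [] → (∀ x ∈ l, x = I) →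
      ∀ S : Finset Ivl, (∀ J ∈ S, Ivl.Conflict J I) → l.foldl arStep S = {I} := by
  intro l
  induction l with
  | nil => simp
  | cons a l ih =>
    intro _ hall S hS
    have ha : a = I := hall a (by simp)
    subst ha
    have hstep : arStep S a = {a} := by
      unfold arStep
      have hemp : S.filter (fun J => ¬ Ivl.Conflict J a) = ∅ := by
        ext J
        simp only [Finset.mem_filter, Finset.notMem_empty, iff_false, not_and]
        intro hJ hc
        exact hc (hS J hJ)
      rw [hemp]
      simp
    simp only [List.foldl_cons, hstep]
    rcases eq_or_ne l [] with rfl | hl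
    · simp
    · exact ih hl (fun x hx => hall x (List.mem_cons_of_mem _ hx)) {a}
        (fun J hJ => by rw [Finset.mem_singleton.mp hJ]; exact hII)

/-- The always-replace algorithm is `2`-competitive on the bad random-order instance:
for the multiset of `m` copies of `I1 = [0, L)` plus `I2 = [v - L, v)` and
`I3 = [L - v, 2L - v)` (with `0 < v < L/2`), the optimum is `2`, while on every arrival
order in which some copy of `I1` arrives after both `I2` and `I3` the always-replace
algorithm ends with the single interval `I1`. -/
theorem always_replace_bad_instance (L v : ℝ) (hL : 0 < L) (hv : 0 < v) (hvL : v < L / 2)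
    (m : ℕ) (hm : 1 ≤ m)
    (I1 I2 I3 : Ivl) (hI1 : I1.s = 0 ∧ I1.f = L) (hI2 : I2.s = v - L ∧ I2.f = v)
    (hI3 : I3.s = L - v ∧ I3.f = 2 * L - v) :
    optM (Multiset.replicate m I1 + {I2, I3}) = 2 ∧
      ∀ σ : List Ivl, (σ : Multiset Ivl) = Multiset.replicate m I1 + {I2, I3} →
        (∃ n : ℕ, I2 ∈ σ.take n ∧ I3 ∈ σ.take n ∧ I1 ∈ σ.drop n) →
        arRun σ = {I1} := by
  obtain ⟨h1s, h1f⟩ := hI1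
  obtain ⟨h2s, h2f⟩ := hI2
  obtain ⟨h3s, h3f⟩ := hI3
  have hm0 : m ≠ 0 := by omega
  -- conflict facts
  have c11 : Ivl.Conflict I1 I1 := ⟨0, by
    constructor <;> (rw [Ivl.toSet, Set.mem_Ico, h1s, h1f]; constructor <;> linarith)⟩
  have c21 : Ivl.Conflict I2 I1 := ⟨0, by
    constructor
    · rw [Ivl.toSet, Set.mem_Ico, h2s, h2f]; constructor <;> linarith
    · rw [Ivl.toSet, Set.mem_Ico, h1s, h1f]; constructor <;> linarith⟩
  have c12 : Ivl.Conflict I1 I2 := ⟨0, by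
    constructor
    · rw [Ivl.toSet, Set.mem_Ico, h1s, h1f]; constructor <;> linarith
    · rw [Ivl.toSet, Set.mem_Ico, h2s, h2f]; constructor <;> linarith⟩
  have c31 : Ivl.Conflict I3 I1 := ⟨L - v, by
    constructor
    · rw [Ivl.toSet, Set.mem_Ico, h3s, h3f]; constructor <;> linarith
    · rw [Ivl.toSet, Set.mem_Ico, h1s, h1f]; constructor <;> linarith⟩
  have nc23 : ¬ Ivl.Conflict I2 I3 := by
    rintro ⟨x, ⟨_, hx2⟩, hx3, _⟩
    rw [h2f] at hx2; rw [h3s] at hx3; linarith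
  have nc32 : ¬ Ivl.Conflict I3 I2 := by
    rintro ⟨x, ⟨hx3, _⟩, _, hx2⟩
    rw [h2f] at hx2; rw [h3s] at hx3; linarith
  -- distinctness
  have ne12 : I1 ≠ I2 := by
    intro h; rw [h] at h1s; rw [h1s] at h2s; linarith
  have ne13 : I1 ≠ I3 := by
    intro h; rw [h] at h1s; rw [h1s] at h3s; linarith
  have ne23 : I2 ≠ I3 := by
    intro h; rw [h] at h2s; rw [h2s] at h3s; linarith
  have htoF : (Multiset.replicate m I1 + {I2, I3}).toFinset = {I1, I2, I3} := by
    ext x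
    simp [Multiset.mem_replicate, hm0]
    tauto
  constructor
  · -- optM = 2
    apply le_antisymm
    · apply Finset.sup_le
      intro T hT
      rw [Finset.mem_filter, Finset.mem_powerset, htoF] at hT
      obtain ⟨hsub, hfeas⟩ := hT
      by_contra hc
      have h3le : ({I1, I2, I3} : Finset Ivl).card ≤ T.card := by
        have : ({I1, I2, I3} : Finset Ivl).card ≤ 3 := by
          apply le_trans (Finset.card_insert_le _ _)
          apply Nat.succ_le_succ
          apply le_trans (Finset.card_insert_le _ _)
          simp
        omega
      have hTeq : T = {I1, I2, I3} := Finset.eq_of_subset_of_card_le hsub h3le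
      have h1T : I1 ∈ T := by rw [hTeq]; simp
      have h2T : I2 ∈ T := by rw [hTeq]; simp
      exact hfeas I1 h1T I2 h2T ne12 c12
    · have hmem : ({I2, I3} : Finset Ivl) ∈
          ((Multiset.replicate m I1 + {I2, I3}).toFinset.powerset.filter
            (fun T => Ivl.Feasible T)) := by
        rw [Finset.mem_filter, Finset.mem_powerset, htoF]
        constructor
        · intro x hx
          rcases Finset.mem_insert.mp hx with h | h <;> simp [h]
        · intro I hI J hJ hne
          rcases Finset.mem_insert.mp hI with h | h <;>
            rcases Finset.mem_insert.mp hJ with h' | h' <;>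
              (try rw [Finset.mem_singleton] at h) <;>
              (try rw [Finset.mem_singleton] at h') <;>
              subst h <;> subst h'
          · exact absurd rfl hne
          · exact nc23
          · exact nc32
          · exact absurd rfl hne
      have hcard : ({I2, I3} : Finset Ivl).card = 2 := by
        rw [Finset.card_insert_of_notMem (by simp [ne23]), Finset.card_singleton]
      calc 2 = ({I2, I3} : Finset Ivl).card := hcard.symm
        _ ≤ _ := Finset.le_sup hmem
  · rintro σ hσ ⟨n, h2t, h3t, h1d⟩
    have hdropne : σ.drop n ≠ [] := List.ne_nil_of_mem h1d
    have hmemσ : ∀ x ∈ σ, x = I1 ∨ x = I2 ∨ x = I3 := by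
      intro x hx
      have hx' : x ∈ (↑σ : Multiset Ivl) := hx
      rw [hσ] at hx'
      simp [Multiset.mem_replicate, hm0] at hx'
      tauto
    have hcoe : (↑σ : Multiset Ivl) = ↑(σ.take n) + ↑(σ.drop n) := by
      conv_lhs => rw [← List.take_append_drop n σ]
      exact Multiset.coe_add _ _
    have hcount : ∀ J : Ivl, J ≠ I1 → J ≠ I2 → J ≠ I3 → True := fun _ _ _ _ => trivial
    have hcnt2 : ((↑σ : Multiset Ivl)).count I2 = 1 := by
      rw [hσ]
      rw [Multiset.count_add, Multiset.count_replicate]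
      have : Multiset.count I2 ({I2, I3} : Multiset Ivl) = 1 := by
        rw [show ({I2, I3} : Multiset Ivl) = I2 ::ₘ {I3} from rfl]
        rw [Multiset.count_cons_self, Multiset.count_singleton]
        simp [ne23]
      rw [this, if_neg ne12]
    have hcnt3 : ((↑σ : Multiset Ivl)).count I3 = 1 := by
      rw [hσ]
      rw [Multiset.count_add, Multiset.count_replicate]
      have : Multiset.count I3 ({I2, I3} : Multiset Ivl) = 1 := by
        rw [show ({I2, I3} : Multiset Ivl) = I2 ::ₘ {I3} from rfl]
        rw [Multiset.count_cons_of_ne (fun h => ne23 h.symm), Multiset.count_singleton]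
        simp
      rw [this, if_neg ne13]
    have hdropI1 : ∀ x ∈ σ.drop n, x = I1 := by
      intro x hx
      rcases hmemσ x (List.mem_of_mem_drop hx) with h | h | h
      · exact h
      · exfalso
        subst h
        have h1 : 1 ≤ ((↑(σ.take n) : Multiset Ivl)).count x :=
          Multiset.one_le_count_iff_mem.mpr (by exact h2t)
        have h2 : 1 ≤ ((↑(σ.drop n) : Multiset Ivl)).count x :=
          Multiset.one_le_count_iff_mem.mpr (by exact hx)
        rw [hcoe, Multiset.count_add] at hcnt2
        omega
      · exfalso
        subst h
        have h1 : 1 ≤ ((↑(σ.take n) : Multiset Ivl)).count x :=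
          Multiset.one_le_count_iff_mem.mpr (by exact h3t)
        have h2 : 1 ≤ ((↑(σ.drop n) : Multiset Ivl)).count x :=
          Multiset.one_le_count_iff_mem.mpr (by exact hx)
        rw [hcoe, Multiset.count_add] at hcnt3
        omega
    have hS0 : ∀ J ∈ (σ.take n).foldl arStep ∅, Ivl.Conflict J I1 := by
      intro J hJ
      rcases mem_foldl_arStep _ _ _ hJ with h | h
      · simp at h
      · rcases hmemσ J (List.mem_of_mem_take h) with h' | h' | h' <;> subst h'
        · exact c11
        · exact c21
        · exact c31
    rw [arRun, ← List.take_append_drop n σ, List.foldl_append]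
    exact foldl_all_conflict I1 c11 _ hdropne hdropI1 _ hS0
end

section
/- Fix L > 0 and α, β ∈ (0, L) with α + β ≤ L, and consider the multiset consisting of m ≥ 1 copies of I1 = [0, L), one copy of I2 = [α − L, α) and one copy of I3 = [L − β, 2L − β). Then opt of this multiset is 2, and for every ordering of the multiset whose first element is a copy of I1, the never-replace algorithm ends with final solution exactly {[0, L)}, of cardinality 1. (Hence, under uniformly random arrival order, the never-replace algorithm has competitive ratio 2 on this instance with high probability.) -/
open scoped Classical

/-- One step of the never-replace algorithm: on arrival of `I`, take `I` iff it conflicts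
with no member of the current solution. -/
noncomputable def nrStep (S : Finset Ivl) (I : Ivl) : Finset Ivl :=
  if ∀ J ∈ S, ¬ Ivl.Conflict J I then insert I S else S

/-- The never-replace algorithm run on a list of arrivals. -/
noncomputable def nrRun (σ : List Ivl) : Finset Ivl := σ.foldl nrStep ∅

lemma conflict_iff (I J : Ivl) : Ivl.Conflict I J ↔ max I.s J.s < min I.f J.f := by
  unfold Ivl.Conflict Ivl.toSet
  rw [Set.Ico_inter_Ico, Set.nonempty_Ico]

lemma foldl_stuck (I1 : Ivl) (l : List Ivl) (h : ∀ X ∈ l, Ivl.Conflict I1 X) :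
    l.foldl nrStep {I1} = {I1} := by
  induction l with
  | nil => rfl
  | cons a t ih =>
    have hc : Ivl.Conflict I1 a := h a (by simp)
    have hstep : nrStep {I1} a = {I1} := by
      unfold nrStep
      rw [if_neg]
      push_neg
      exact ⟨I1, Finset.mem_singleton_self _, hc⟩
    simp only [List.foldl_cons, hstep]
    exact ih fun X hX => h X (by simp [hX])

/-- The never-replace algorithm is `2`-competitive on the bad random-order instance:
for the multiset of `m` copies of `I1 = [0, L)` plus `I2 = [α - L, α)` and
`I3 = [L - β, 2L - β)` (with `α, β ∈ (0, L)`, `α + β ≤ L`), the optimum is `2`, while on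
every arrival order starting with a copy of `I1` the never-replace algorithm ends with the
single interval `I1`. -/
theorem never_replace_bad_instance (L α β : ℝ) (hL : 0 < L)
    (hα : α ∈ Set.Ioo 0 L) (hβ : β ∈ Set.Ioo 0 L) (hαβ : α + β ≤ L)
    (m : ℕ) (hm : 1 ≤ m)
    (I1 I2 I3 : Ivl) (hI1 : I1.s = 0 ∧ I1.f = L) (hI2 : I2.s = α - L ∧ I2.f = α)
    (hI3 : I3.s = L - β ∧ I3.f = 2 * L - β) :
    optM (Multiset.replicate m I1 + {I2, I3}) = 2 ∧
      ∀ σ : List Ivl, (σ : Multiset Ivl) = Multiset.replicate m I1 + {I2, I3} →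
        σ.head? = some I1 →
        nrRun σ = {I1} := by
  obtain ⟨h1s, h1f⟩ := hI1
  obtain ⟨h2s, h2f⟩ := hI2
  obtain ⟨h3s, h3f⟩ := hI3
  obtain ⟨hα0, hαL⟩ := hα
  obtain ⟨hβ0, hβL⟩ := hβ
  -- distinctness
  have ne12 : I1 ≠ I2 := fun h => by rw [h] at h1s; linarith [h1s.symm.trans h2s]
  have ne13 : I1 ≠ I3 := fun h => by rw [h] at h1s; linarith [h1s.symm.trans h3s]
  have ne23 : I2 ≠ I3 := fun h => by rw [h] at h2s; linarith [h2s.symm.trans h3s]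
  -- conflicts
  have c11 : Ivl.Conflict I1 I1 := by rw [conflict_iff]; simp [h1s, h1f, hL]
  have c12 : Ivl.Conflict I1 I2 := by
    rw [conflict_iff, h1s, h1f, h2s, h2f]
    rw [max_lt_iff, lt_min_iff, lt_min_iff]
    constructor <;> constructor <;> linarith
  have c13 : Ivl.Conflict I1 I3 := by
    rw [conflict_iff, h1s, h1f, h3s, h3f]
    rw [max_lt_iff, lt_min_iff, lt_min_iff]
    constructor <;> constructor <;> linarith
  have nc23 : ¬ Ivl.Conflict I2 I3 := by
    rw [conflict_iff, h2s, h2f, h3s, h3f]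
    push_neg
    calc min α (2 * L - β) ≤ α := min_le_left _ _
    _ ≤ L - β := by linarith
    _ ≤ max (α - L) (L - β) := le_max_right _ _
  have memM : ∀ x : Ivl, x ∈ (Multiset.replicate m I1 + {I2, I3} : Multiset Ivl) ↔
      x = I1 ∨ x = I2 ∨ x = I3 := by
    intro x
    have hm0 : m ≠ 0 := by omega
    simp [Multiset.mem_replicate, hm0]
    tauto
  constructor
  · apply le_antisymm
    · apply Finset.sup_le
      intro T hT
      rw [Finset.mem_filter, Finset.mem_powerset] at hT
      obtain ⟨hsub, hfeas⟩ := hT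
      have hsub' : ∀ x ∈ T, x = I1 ∨ x = I2 ∨ x = I3 := by
        intro x hx
        have := hsub hx
        rw [Multiset.mem_toFinset, memM] at this
        exact this
      by_cases h1 : I1 ∈ T
      · have h2 : I2 ∉ T := fun h2 => hfeas I1 h1 I2 h2 ne12 c12
        have h3 : I3 ∉ T := fun h3 => hfeas I1 h1 I3 h3 ne13 c13
        have : T ⊆ {I1} := by
          intro x hx
          rcases hsub' x hx with h | h | h
          · simp [h]
          · exact absurd (h ▸ hx) h2
          · exact absurd (h ▸ hx) h3
        calc T.card ≤ ({I1} : Finset Ivl).card := Finset.card_le_card this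
          _ ≤ 2 := by simp
      · have : T ⊆ {I2, I3} := by
          intro x hx
          rcases hsub' x hx with h | h | h
          · exact absurd (h ▸ hx) h1
          · simp [h]
          · simp [h]
        calc T.card ≤ ({I2, I3} : Finset Ivl).card := Finset.card_le_card this
          _ = 2 := Finset.card_pair ne23
    · have hmem : ({I2, I3} : Finset Ivl) ∈
          ((Multiset.replicate m I1 + {I2, I3} : Multiset Ivl).toFinset.powerset.filter
            (fun T => Ivl.Feasible T)) := by
        rw [Finset.mem_filter, Finset.mem_powerset]
        constructor
        · intro x hx
          rw [Multiset.mem_toFinset, memM]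
          rcases Finset.mem_insert.mp hx with h | h
          · exact Or.inr (Or.inl h)
          · exact Or.inr (Or.inr (Finset.mem_singleton.mp h))
        · intro I hI J hJ hne
          simp only [Finset.mem_insert, Finset.mem_singleton] at hI hJ
          rcases hI with rfl | rfl <;> rcases hJ with rfl | rfl
          · exact absurd rfl hne
          · exact nc23
          · exact fun h => nc23 (conflict_comm h)
          · exact absurd rfl hne
      calc 2 = ({I2, I3} : Finset Ivl).card := (Finset.card_pair ne23).symm
        _ ≤ _ := Finset.le_sup hmem
  · intro σ hσ hhead
    cases σ with
    | nil => simp at hhead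
    | cons a t =>
      have ha : a = I1 := by simpa using hhead
      subst ha
      have hstep0 : nrStep ∅ a = {a} := by simp [nrStep]
      show (a :: t).foldl nrStep ∅ = {a}
      rw [List.foldl_cons, hstep0]
      apply foldl_stuck
      intro X hX
      have : X ∈ (Multiset.replicate m a + {I2, I3} : Multiset Ivl) := by
        rw [← hσ]; simp [hX]
      rcases (memM X).mp this with h | h | h <;> subst h
      · exact c11
      · exact c12
      · exact c13
end
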